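/- arXiv:1505.02362 — 3 statements merged into one kernel-verified Lean document; each statement's English description precedes it below -/
import Mathlib

section
/- Fix an integer W ≥ 2, real numbers a > 0 and b > 0, and an index i ∈ {1,…,W}. Consider the optimization over probability vectors λ on {1,…,W} (i.e., λ(j) ≥ 0 for all j and Σ_{j=1}^{W} λ(j) = 1) of the quantity min_{j ≠ i} ( λ(i)·a + λ(j)·b ). Then: (1) if a > b/(W−1), the supremum over all probability vectors λ of min_{j ≠ i} ( λ(i)·a + λ(j)·b ) equals a, and it is attained by λ with λ(i) = 1 and λ(j) = 0 for all j ≠ i; (2) if a ≤ b/(W−1), the supremum equals b/(W−1), and it is attained by λ with λ(i) = 0 and λ(j) = 1/(W−1) for all j ≠ i. -/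
/-- The quantity `min_{j ≠ i} (λ(i)·a + λ(j)·b)` for a weight vector `l` on `Fin W`. -/
noncomputable def oddballVal (W : ℕ) (hW : 2 ≤ W) (a b : ℝ) (i : Fin W)
    (l : Fin W → ℝ) : ℝ :=
  (Finset.univ.erase i).inf'
    (by
      apply Finset.card_pos.mp
      rw [Finset.card_erase_of_mem (Finset.mem_univ i), Finset.card_univ, Fintype.card_fin]
      omega)
    (fun j => l i * a + l j * b)

/-!
The average of `λ(i)·a + λ(j)·b` over the `W - 1` indices `j ≠ i` is
`λ(i)·a + (1 - λ(i))·b/(W-1)`, a convex combination of `a` and `b/(W-1)`; the minimum is at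
most this average, hence at most `max a (b/(W-1))`. The two extreme weight vectors make every
term of the minimum equal to `a`, respectively `b/(W-1)`.
-/

open Finset

section

variable {W : ℕ} (hW : 2 ≤ W) (a b : ℝ) (i : Fin W)

include hW in
lemma natCast_sub_one_pos : (0 : ℝ) < W - 1 := by
  have : (2 : ℝ) ≤ W := by exact_mod_cast hW
  linarith

lemma card_univ_erase_fin : ((univ.erase i).card : ℝ) = W - 1 := by
  rw [card_erase_of_mem (mem_univ i), card_univ, Fintype.card_fin,
    Nat.cast_sub (Fin.pos i), Nat.cast_one]

lemma sub_one_mul_oddballVal_le (l : Fin W → ℝ) (hs : ∑ j, l j = 1) :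
    (W - 1) * oddballVal W hW a b i l ≤ (W - 1) * l i * a + (1 - l i) * b := by
  have hmin := (univ.erase i).card_nsmul_le_sum (fun j => l i * a + l j * b)
    (oddballVal W hW a b i l) fun j hj => inf'_le _ hj
  rw [nsmul_eq_mul, card_univ_erase_fin, sum_add_distrib, sum_const, nsmul_eq_mul,
    card_univ_erase_fin, ← sum_mul, sum_erase_eq_sub (mem_univ i), hs] at hmin
  linarith

lemma oddballVal_le_max (l : Fin W → ℝ) (hl : ∀ j, 0 ≤ l j) (hs : ∑ j, l j = 1) :
    oddballVal W hW a b i l ≤ max a (b / (W - 1)) := by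
  have hW1 := natCast_sub_one_pos hW
  have hli : l i ≤ 1 := hs ▸ single_le_sum (fun j _ => hl j) (mem_univ i)
  have hb : b ≤ (W - 1) * max a (b / (W - 1)) := by
    rw [← div_le_iff₀' hW1]; exact le_max_right _ _
  have ha : a ≤ max a (b / (W - 1)) := le_max_left _ _
  have hcomb : (W - 1) * l i * a + (1 - l i) * b ≤ (W - 1) * max a (b / (W - 1)) := by
    nlinarith [mul_le_mul_of_nonneg_left ha (mul_nonneg hW1.le (hl i)),
      mul_le_mul_of_nonneg_left hb (sub_nonneg.2 hli)]
  exact le_of_mul_le_mul_left ((sub_one_mul_oddballVal_le hW a b i l hs).trans hcomb) hW1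

lemma oddballVal_eq_of_forall_ne (l : Fin W → ℝ) (c : ℝ) (h : ∀ j, j ≠ i → l j = c) :
    oddballVal W hW a b i l = l i * a + c * b := by
  rw [oddballVal, inf'_congr _ rfl fun j hj => by rw [h j (ne_of_mem_erase hj)], inf'_const]

end

theorem stmt_0_general (W : ℕ) (hW : 2 ≤ W) (a b : ℝ) (i : Fin W) :
    (a > b / ((W : ℝ) - 1) →
      (∀ l : Fin W → ℝ, (∀ j, 0 ≤ l j) → ∑ j, l j = 1 →
        oddballVal W hW a b i l ≤ a) ∧
      (∀ j : Fin W, (0 : ℝ) ≤ if j = i then 1 else 0) ∧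
      (∑ j : Fin W, (if j = i then (1 : ℝ) else 0)) = 1 ∧
      oddballVal W hW a b i (fun j => if j = i then 1 else 0) = a) ∧
    (a ≤ b / ((W : ℝ) - 1) →
      (∀ l : Fin W → ℝ, (∀ j, 0 ≤ l j) → ∑ j, l j = 1 →
        oddballVal W hW a b i l ≤ b / ((W : ℝ) - 1)) ∧
      (∀ j : Fin W, (0 : ℝ) ≤ if j = i then 0 else 1 / ((W : ℝ) - 1)) ∧
      (∑ j : Fin W, (if j = i then (0 : ℝ) else 1 / ((W : ℝ) - 1))) = 1 ∧
      oddballVal W hW a b i (fun j => if j = i then 0 else 1 / ((W : ℝ) - 1)) =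
        b / ((W : ℝ) - 1)) := by
  have hW1 := natCast_sub_one_pos hW
  refine ⟨fun hgt => ⟨?_, ?_, ?_, ?_⟩, fun hle => ⟨?_, ?_, ?_, ?_⟩⟩
  · simpa [max_eq_left hgt.le] using oddballVal_le_max hW a b i
  · intro j; split_ifs <;> norm_num
  · simp
  · rw [oddballVal_eq_of_forall_ne hW a b i _ 0 fun j hj => if_neg hj, if_pos rfl]
    ring
  · simpa [max_eq_right hle] using oddballVal_le_max hW a b i
  · intro j; split_ifs <;> positivity
  · rw [← add_sum_erase _ _ (mem_univ i), sum_congr rfl fun j hj => if_neg (ne_of_mem_erase hj),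
      sum_const, nsmul_eq_mul, card_univ_erase_fin, if_pos rfl, zero_add]
    field_simp
  · rw [oddballVal_eq_of_forall_ne hW a b i _ (1 / (W - 1)) fun j hj => if_neg hj, if_pos rfl]
    ring

theorem stmt_0 (W : ℕ) (hW : 2 ≤ W) (a b : ℝ) (ha : 0 < a) (hb : 0 < b) (i : Fin W) :
    (a > b / ((W : ℝ) - 1) →
      (∀ l : Fin W → ℝ, (∀ j, 0 ≤ l j) → ∑ j, l j = 1 →
        oddballVal W hW a b i l ≤ a) ∧
      (∀ j : Fin W, (0 : ℝ) ≤ if j = i then 1 else 0) ∧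
      (∑ j : Fin W, (if j = i then (1 : ℝ) else 0)) = 1 ∧
      oddballVal W hW a b i (fun j => if j = i then 1 else 0) = a) ∧
    (a ≤ b / ((W : ℝ) - 1) →
      (∀ l : Fin W → ℝ, (∀ j, 0 ≤ l j) → ∑ j, l j = 1 →
        oddballVal W hW a b i l ≤ b / ((W : ℝ) - 1)) ∧
      (∀ j : Fin W, (0 : ℝ) ≤ if j = i then 0 else 1 / ((W : ℝ) - 1)) ∧
      (∑ j : Fin W, (if j = i then (0 : ℝ) else 1 / ((W : ℝ) - 1))) = 1 ∧
      oddballVal W hW a b i (fun j => if j = i then 0 else 1 / ((W : ℝ) - 1)) =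
        b / ((W : ℝ) - 1)) :=
  stmt_0_general W hW a b i
end

section
/- Fix an integer W ≥ 3, real numbers a > 0 and b > 0 with a > b/(W−1), and an index i ∈ {1,…,W}. For a probability vector λ on {1,…,W} and each j ∈ {1,…,2W} with j ≠ i, define c_j(λ) = λ(i)·a + λ(j)·b if j ≤ W and j ≠ i; c_j(λ) = λ(i)·a + (1−λ(i))·b if j = i+W; and c_j(λ) = (1 − λ(i) − λ(j−W))·b if j > W and j ≠ i+W. Then the supremum over all probability vectors λ on {1,…,W} of min_{j ∈ {1,…,2W}, j ≠ i} c_j(λ) equals (W−2)·a·b / ( (W−1)·a + (W−3)·b ), and it is attained by the probability vector λ with λ(i) = (W−3)·b / ( (W−1)·a + (W−3)·b ) and λ(j) = a / ( (W−1)·a + (W−3)·b ) for every j ≠ i, 1 ≤ j ≤ W. -/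
/-- The quantity `c_j(λ)` from Case 2 of the visual search problem (zero-based indexing:
locations are `0,…,W−1`, hypotheses are `0,…,2W−1`). -/
noncomputable def cFun (W : ℕ) (a b : ℝ) (i : ℕ) (l : ℕ → ℝ) (j : ℕ) : ℝ :=
  if j < W then l i * a + l j * b
  else if j = i + W then l i * a + (1 - l i) * b
  else (1 - l i - l (j - W)) * b

/-- `min_{j ∈ {0,…,2W−1}, j ≠ i} c_j(λ)`. -/
noncomputable def minC (W : ℕ) (hW : 3 ≤ W) (a b : ℝ) (i : ℕ) (hi : i < W)
    (l : ℕ → ℝ) : ℝ :=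
  ((Finset.range (2 * W)).erase i).inf'
    (by
      apply Finset.card_pos.mp
      rw [Finset.card_erase_of_mem (Finset.mem_range.mpr (by omega)), Finset.card_range]
      omega)
    (cFun W a b i l)



/-!
Every location hypothesis `j ≠ i` and its twin `j + W` give two upper bounds on the minimum `m`:
`m ≤ λ(i)a + λ(j)b` and `m ≤ (1 - λ(i) - λ(j))b`. Averaging each family over the `W - 1`
locations `j ≠ i` leaves two bounds depending on `t = λ(i)` alone,
`(W-1)m ≤ (W-1)ta + (1-t)b` and `(W-1)m ≤ (W-2)(1-t)b`, and the combination with weights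
`(W-2)b` and `(W-1)a - b` (nonnegative exactly when `a ≥ b/(W-1)`) eliminates `t`. The proposed
vector equalizes all `c_j` except `c_{i+W}`, which is twice as large, so it attains the bound.
-/

open Finset

section Bounds

variable {W : ℕ} {a b : ℝ} {i : ℕ} {l : ℕ → ℝ}

theorem cFun_of_lt {j : ℕ} (hj : j < W) : cFun W a b i l j = l i * a + l j * b := by
  simp [cFun, hj]

theorem cFun_self_add : cFun W a b i l (i + W) = l i * a + (1 - l i) * b := by
  simp [cFun]

theorem cFun_add {j : ℕ} (hji : j ≠ i) : cFun W a b i l (j + W) = (1 - l i - l j) * b := by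
  simp [cFun, hji]

variable (hW : 3 ≤ W) (hi : i < W)

theorem minC_le_cFun {j : ℕ} (hj : j < 2 * W) (hji : j ≠ i) :
    minC W hW a b i hi l ≤ cFun W a b i l j :=
  inf'_le _ (mem_erase.2 ⟨hji, mem_range.2 hj⟩)

theorem le_minC {v : ℝ} (h : ∀ j < 2 * W, j ≠ i → v ≤ cFun W a b i l j) :
    v ≤ minC W hW a b i hi l :=
  le_inf' _ _ fun j hj => h j (mem_range.1 (mem_of_mem_erase hj)) (ne_of_mem_erase hj)

include hi in
theorem card_erase_range_eq : (((range W).erase i).card : ℝ) = (W : ℝ) - 1 := by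
  rw [card_erase_of_mem (mem_range.2 hi), card_range, Nat.cast_pred (by omega)]

include hi in
theorem sum_erase_range_eq (hsum : ∑ j ∈ range W, l j = 1) :
    ∑ j ∈ (range W).erase i, l j = 1 - l i := by
  rw [sum_erase_eq_sub (mem_range.2 hi), hsum]

theorem sub_one_mul_minC_le_of_locations (hsum : ∑ j ∈ range W, l j = 1) :
    ((W : ℝ) - 1) * minC W hW a b i hi l ≤ ((W : ℝ) - 1) * l i * a + (1 - l i) * b := by
  have hle : ∀ j ∈ (range W).erase i, minC W hW a b i hi l ≤ l i * a + l j * b := fun j hj => by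
    have hjW := mem_range.1 (mem_of_mem_erase hj)
    exact (minC_le_cFun hW hi (by omega) (ne_of_mem_erase hj)).trans_eq (cFun_of_lt hjW)
  replace hle := card_nsmul_le_sum _ _ _ hle
  rw [nsmul_eq_mul, card_erase_range_eq hi, sum_add_distrib, sum_const, nsmul_eq_mul,
    card_erase_range_eq hi, ← sum_mul, sum_erase_range_eq hi hsum] at hle
  linarith

theorem sub_one_mul_minC_le_of_twins (hsum : ∑ j ∈ range W, l j = 1) :
    ((W : ℝ) - 1) * minC W hW a b i hi l ≤ ((W : ℝ) - 2) * (1 - l i) * b := by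
  have hle : ∀ j ∈ (range W).erase i, minC W hW a b i hi l ≤ (1 - l i - l j) * b :=
    fun j hj => by
      have hjW := mem_range.1 (mem_of_mem_erase hj)
      exact (minC_le_cFun hW hi (by omega) (by omega)).trans_eq (cFun_add (ne_of_mem_erase hj))
  replace hle := card_nsmul_le_sum _ _ _ hle
  simp only [sub_mul, sum_sub_distrib, sum_const, ← sum_mul, sum_erase_range_eq hi hsum,
    nsmul_eq_mul, card_erase_range_eq hi] at hle
  linarith

end Bounds

theorem le_div_of_sub_one_mul_le {w a b t m : ℝ} (hw : 2 ≤ w) (hb : 0 ≤ b)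
    (hab : b ≤ (w - 1) * a) (hD : 0 < (w - 1) * a + (w - 3) * b)
    (hloc : (w - 1) * m ≤ (w - 1) * t * a + (1 - t) * b)
    (htwin : (w - 1) * m ≤ (w - 2) * (1 - t) * b) :
    m ≤ (w - 2) * a * b / ((w - 1) * a + (w - 3) * b) := by
  rw [le_div_iff₀ hD]
  have hcomb : (w - 1) * (m * ((w - 1) * a + (w - 3) * b)) ≤ (w - 1) * ((w - 2) * a * b) := by
    nlinarith [mul_le_mul_of_nonneg_left hloc (mul_nonneg (sub_nonneg.2 hw) hb),
      mul_le_mul_of_nonneg_left htwin (sub_nonneg.2 hab)]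
  exact le_of_mul_le_mul_left hcomb (by linarith)

theorem minC_le_of_sum_eq_one {W : ℕ} (hW : 3 ≤ W) {a b : ℝ} (hb : 0 ≤ b)
    (hab : b ≤ ((W : ℝ) - 1) * a) (hD : 0 < ((W : ℝ) - 1) * a + ((W : ℝ) - 3) * b)
    {i : ℕ} (hi : i < W) {l : ℕ → ℝ} (hsum : ∑ j ∈ range W, l j = 1) :
    minC W hW a b i hi l ≤ ((W : ℝ) - 2) * a * b / (((W : ℝ) - 1) * a + ((W : ℝ) - 3) * b) :=
  le_div_of_sub_one_mul_le (by exact_mod_cast (by omega : 2 ≤ W)) hb hab hD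
    (sub_one_mul_minC_le_of_locations hW hi hsum) (sub_one_mul_minC_le_of_twins hW hi hsum)

noncomputable def optimalWeight (W : ℕ) (a b : ℝ) (i j : ℕ) : ℝ :=
  if j = i then ((W : ℝ) - 3) * b / (((W : ℝ) - 1) * a + ((W : ℝ) - 3) * b)
  else a / (((W : ℝ) - 1) * a + ((W : ℝ) - 3) * b)

section Optimal

variable {W : ℕ} {a b : ℝ} {i : ℕ}

theorem optimalWeight_self :
    optimalWeight W a b i i = ((W : ℝ) - 3) * b / (((W : ℝ) - 1) * a + ((W : ℝ) - 3) * b) :=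
  if_pos rfl

theorem optimalWeight_of_ne {j : ℕ} (hji : j ≠ i) :
    optimalWeight W a b i j = a / (((W : ℝ) - 1) * a + ((W : ℝ) - 3) * b) :=
  if_neg hji

theorem optimalWeight_nonneg (hW : 3 ≤ W) (ha : 0 ≤ a) (hb : 0 ≤ b)
    (hD : 0 < ((W : ℝ) - 1) * a + ((W : ℝ) - 3) * b) (j : ℕ) : 0 ≤ optimalWeight W a b i j := by
  have hW3 : (3 : ℝ) ≤ W := by exact_mod_cast hW
  unfold optimalWeight
  split_ifs
  · exact div_nonneg (mul_nonneg (by linarith) hb) hD.le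
  · exact div_nonneg ha hD.le

theorem sum_optimalWeight (hi : i < W) (hD : ((W : ℝ) - 1) * a + ((W : ℝ) - 3) * b ≠ 0) :
    ∑ j ∈ range W, optimalWeight W a b i j = 1 := by
  rw [← add_sum_erase _ _ (mem_range.2 hi), optimalWeight_self,
    sum_congr rfl fun j hj => optimalWeight_of_ne (ne_of_mem_erase hj), sum_const, nsmul_eq_mul,
    card_erase_range_eq hi]
  field_simp
  ring

variable (hD : ((W : ℝ) - 1) * a + ((W : ℝ) - 3) * b ≠ 0)
include hD

theorem cFun_optimalWeight_of_lt {j : ℕ} (hj : j < W) (hji : j ≠ i) :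
    cFun W a b i (optimalWeight W a b i) j =
      ((W : ℝ) - 2) * a * b / (((W : ℝ) - 1) * a + ((W : ℝ) - 3) * b) := by
  rw [cFun_of_lt hj, optimalWeight_self, optimalWeight_of_ne hji]
  field_simp
  ring

theorem cFun_optimalWeight_self_add :
    cFun W a b i (optimalWeight W a b i) (i + W) =
      2 * (((W : ℝ) - 2) * a * b / (((W : ℝ) - 1) * a + ((W : ℝ) - 3) * b)) := by
  rw [cFun_self_add, optimalWeight_self]
  field_simp
  ring

theorem cFun_optimalWeight_add {j : ℕ} (hji : j ≠ i) :
    cFun W a b i (optimalWeight W a b i) (j + W) =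
      ((W : ℝ) - 2) * a * b / (((W : ℝ) - 1) * a + ((W : ℝ) - 3) * b) := by
  rw [cFun_add hji, optimalWeight_self, optimalWeight_of_ne hji]
  field_simp
  ring

end Optimal

theorem minC_optimalWeight {W : ℕ} (hW : 3 ≤ W) {a b : ℝ} (ha : 0 ≤ a) (hb : 0 ≤ b)
    (hD : 0 < ((W : ℝ) - 1) * a + ((W : ℝ) - 3) * b) {i : ℕ} (hi : i < W) :
    minC W hW a b i hi (optimalWeight W a b i) =
      ((W : ℝ) - 2) * a * b / (((W : ℝ) - 1) * a + ((W : ℝ) - 3) * b) := by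
  have hW3 : (3 : ℝ) ≤ W := by exact_mod_cast hW
  have hV : 0 ≤ ((W : ℝ) - 2) * a * b / (((W : ℝ) - 1) * a + ((W : ℝ) - 3) * b) :=
    div_nonneg (mul_nonneg (mul_nonneg (by linarith) ha) hb) hD.le
  obtain ⟨j₀, hj₀W, hj₀i⟩ : ∃ j₀ < W, j₀ ≠ i := by
    rcases Nat.eq_zero_or_pos i with h | h
    · exact ⟨1, by omega, by omega⟩
    · exact ⟨0, by omega, by omega⟩
  refine le_antisymm ((minC_le_cFun hW hi (by omega) hj₀i).trans_eq
    (cFun_optimalWeight_of_lt hD.ne' hj₀W hj₀i)) (le_minC hW hi fun j hj hji => ?_)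
  rcases lt_or_ge j W with hjW | hjW
  · exact (cFun_optimalWeight_of_lt hD.ne' hjW hji).ge
  obtain ⟨k, rfl⟩ := Nat.exists_eq_add_of_le' hjW
  rcases eq_or_ne k i with rfl | hki
  · rw [cFun_optimalWeight_self_add hD.ne']
    linarith
  · exact (cFun_optimalWeight_add hD.ne' hki).ge

theorem stmt_1 (W : ℕ) (hW : 3 ≤ W) (a b : ℝ) (ha : 0 < a) (hb : 0 < b)
    (hab : a > b / ((W : ℝ) - 1)) (i : ℕ) (hi : i < W) :
    (∀ l : ℕ → ℝ, (∀ j, j < W → 0 ≤ l j) → (∑ j ∈ Finset.range W, l j) = 1 →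
      minC W hW a b i hi l ≤
        ((W : ℝ) - 2) * a * b / (((W : ℝ) - 1) * a + ((W : ℝ) - 3) * b)) ∧
    (∀ j, j < W → (0 : ℝ) ≤
      if j = i then ((W : ℝ) - 3) * b / (((W : ℝ) - 1) * a + ((W : ℝ) - 3) * b)
      else a / (((W : ℝ) - 1) * a + ((W : ℝ) - 3) * b)) ∧
    (∑ j ∈ Finset.range W,
      (if j = i then ((W : ℝ) - 3) * b / (((W : ℝ) - 1) * a + ((W : ℝ) - 3) * b)
       else a / (((W : ℝ) - 1) * a + ((W : ℝ) - 3) * b))) = 1 ∧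
    minC W hW a b i hi
      (fun j => if j = i then ((W : ℝ) - 3) * b / (((W : ℝ) - 1) * a + ((W : ℝ) - 3) * b)
                else a / (((W : ℝ) - 1) * a + ((W : ℝ) - 3) * b)) =
      ((W : ℝ) - 2) * a * b / (((W : ℝ) - 1) * a + ((W : ℝ) - 3) * b) := by
  have hW3 : (3 : ℝ) ≤ W := by exact_mod_cast hW
  have hab' : b ≤ ((W : ℝ) - 1) * a := by
    rw [gt_iff_lt, div_lt_iff₀ (by linarith)] at hab
    linarith
  have hD : 0 < ((W : ℝ) - 1) * a + ((W : ℝ) - 3) * b := by nlinarith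
  exact ⟨fun l _ hsum => minC_le_of_sum_eq_one hW hb.le hab' hD hi hsum,
    fun j _ => optimalWeight_nonneg hW ha.le hb.le hD j, sum_optimalWeight hi hD.ne',
    minC_optimalWeight hW ha.le hb.le hD hi⟩
end

section
/- Let (Ω, F, P) be a probability space, let 𝒜 be a finite set, let A be an 𝒜-valued random variable, let Y be a real-valued random variable, and let G be a sub-σ-algebra of F. Let B ⊆ 𝒜 be nonempty, and for each a ∈ B let ρ_a ∈ (0,1). Assume: (i) for each a ∈ 𝒜, conditioned on the event {A = a}, Y is independent of G and E[ e^{Y} | A = a ] ≤ ρ_a for a ∈ B; (ii) Y = 0 almost surely on the event {A ∉ B}; and (iii) P( A ∈ B | G ) ≥ c almost surely, for some constant c ∈ (0,1]. Then E[ e^{Y} | G ] ≤ c · max_{a ∈ B} ρ_a + (1 − c) almost surely; in particular E[ e^{Y} | G ] < 1 almost surely. -/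
/-!
Split `e^Y` along the fibres `{A = a}`. For `a ∈ B`, independence of `Y` and `G` under
`P[|A = a]` gives `E[1_{A = a} e^Y | G] = E[e^Y | A = a] · P(A = a | G) ≤ r · P(A = a | G)` with
`r = max_{a ∈ B} ρ_a`, while `e^Y = 1` a.s. off `{A ∈ B}`. Summing, with `κ = P(A ∈ B | G) ≥ c`,
`E[e^Y | G] ≤ r κ + (1 - κ) = 1 - (1 - r) κ ≤ c r + (1 - c) < 1`.
-/

open MeasureTheory ProbabilityTheory

namespace ProbabilityTheory

variable {Ω : Type*} {G mΩ : MeasurableSpace Ω} {μ : Measure Ω}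
  {s t : Set Ω} {f : Ω → ℝ}

lemma restrict_eq_smul_cond [IsFiniteMeasure μ] (hs : MeasurableSet s) :
    μ.restrict s = μ s • μ[|s] := by
  ext u hu
  rw [Measure.smul_apply, smul_eq_mul, mul_comm, cond_mul_eq_inter hs,
    Measure.restrict_apply hu, Set.inter_comm]

lemma setIntegral_indicator_eq_integral_cond_mul [IsFiniteMeasure μ] (hG : G ≤ mΩ)
    (hf : AEStronglyMeasurable f μ) (ht : MeasurableSet t) (hs : MeasurableSet[G] s)
    (hindep : Indep (MeasurableSpace.comap f inferInstance) G μ[|t]) :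
    ∫ ω in s, t.indicator f ω ∂μ = (∫ ω, f ω ∂μ[|t]) * μ.real (t ∩ s) := by
  have hsG : Measurable[G] (s.indicator (1 : Ω → ℝ)) :=
    Measurable.indicator (by exact measurable_const) hs
  have hfs : IndepFun f (s.indicator 1) μ[|t] := indep_of_indep_of_le_right hindep hsG.comap_le
  calc ∫ ω in s, t.indicator f ω ∂μ
      = ∫ ω, f ω * s.indicator 1 ω ∂μ.restrict t := by
        rw [setIntegral_indicator ht, Set.inter_comm, ← setIntegral_indicator (hG s hs)]
        congr 1 with ω
        by_cases hω : ω ∈ s <;> simp [hω]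
    _ = μ.real t * ∫ ω, f ω * s.indicator 1 ω ∂μ[|t] := by
        rw [restrict_eq_smul_cond ht, integral_smul_measure]; rfl
    _ = μ.real t * ((∫ ω, f ω ∂μ[|t]) * μ[|t].real s) := by
        rw [hfs.integral_fun_mul_eq_mul_integral (hf.mono_ac cond_absolutelyContinuous)
          (aestronglyMeasurable_const.indicator (hG s hs)), integral_indicator_one (hG s hs)]
    _ = (∫ ω, f ω ∂μ[|t]) * μ.real (t ∩ s) := by
        rw [measureReal_def, measureReal_def, measureReal_def, ← cond_mul_eq_inter ht,
          ENNReal.toReal_mul]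
        ring

lemma condExp_indicator_ae_eq_integral_cond_mul [IsFiniteMeasure μ] (hG : G ≤ mΩ)
    (hf : Integrable f μ) (ht : MeasurableSet t)
    (hindep : Indep (MeasurableSpace.comap f inferInstance) G μ[|t]) :
    μ[t.indicator f | G] =ᵐ[μ]
      fun ω => (∫ x, f x ∂μ[|t]) * μ[t.indicator (fun _ => (1 : ℝ)) | G] ω := by
  refine (ae_eq_condExp_of_forall_setIntegral_eq hG (hf.indicator ht)
    (fun s _ _ => (integrable_condExp.const_mul _).integrableOn) (fun s hs _ => ?_)
    (stronglyMeasurable_condExp.const_mul _).aestronglyMeasurable).symm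
  rw [integral_const_mul, setIntegral_condExp hG ((integrable_const (1 : ℝ)).indicator ht) hs,
    setIntegral_indicator_eq_integral_cond_mul hG hf.aestronglyMeasurable ht hs hindep,
    integral_indicator ht, Measure.restrict_restrict ht, setIntegral_const, smul_eq_mul,
    mul_one]

lemma condExp_indicator_compl_ae_eq [IsFiniteMeasure μ] (hG : G ≤ mΩ) (hs : MeasurableSet s)
    (hf : ∀ᵐ ω ∂μ, ω ∉ s → f ω = 1) :
    μ[sᶜ.indicator f | G] =ᵐ[μ] fun ω => 1 - μ[s.indicator (fun _ => (1 : ℝ)) | G] ω := by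
  have hfs : sᶜ.indicator f =ᵐ[μ] (fun _ => 1) - s.indicator (fun _ => (1 : ℝ)) := by
    filter_upwards [hf] with ω hω
    by_cases hωs : ω ∈ s <;> simp [hωs, hω]
  filter_upwards [condExp_congr_ae (m := G) hfs,
    condExp_sub (integrable_const (1 : ℝ)) ((integrable_const (1 : ℝ)).indicator hs) G]
    with ω h₁ h₂
  rw [h₁, h₂, Pi.sub_apply, condExp_const hG]

lemma indicator_preimage_finset_eq_sum {α β : Type*} [AddCommMonoid β] (A : Ω → α)
    (B : Finset α) (g : Ω → β) :
    (A ⁻¹' B).indicator g = ∑ a ∈ B, (A ⁻¹' {a}).indicator g := by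
  rw [← Set.biUnion_preimage_singleton, Finset.set_biUnion_coe,
    Finset.indicator_biUnion B _ (Set.pairwiseDisjoint_fiber A _)]
  ext ω
  simp

variable {α : Type*} [MeasurableSpace α] [MeasurableSingletonClass α] {A : Ω → α}
  {B : Finset α} {r : ℝ}

lemma condExp_indicator_preimage_le [IsFiniteMeasure μ] (hG : G ≤ mΩ) (hA : Measurable A)
    (hf : Integrable f μ)
    (hindep : ∀ a ∈ B, Indep (MeasurableSpace.comap f inferInstance) G μ[|A ⁻¹' {a}])
    (hmean : ∀ a ∈ B, ∫ x, f x ∂μ[|A ⁻¹' {a}] ≤ r) :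
    μ[(A ⁻¹' B).indicator f | G] ≤ᵐ[μ]
      fun ω => r * μ[(A ⁻¹' B).indicator (fun _ => (1 : ℝ)) | G] ω := by
  have hfiber (a : α) : MeasurableSet (A ⁻¹' {a}) := hA (measurableSet_singleton a)
  have hfiberwise : ∀ᵐ ω ∂μ, ∀ a ∈ B, μ[(A ⁻¹' {a}).indicator f | G] ω
      = (∫ x, f x ∂μ[|A ⁻¹' {a}]) * μ[(A ⁻¹' {a}).indicator (fun _ => (1 : ℝ)) | G] ω :=
    (ae_ball_iff B.countable_toSet).2 fun a ha =>
      condExp_indicator_ae_eq_integral_cond_mul hG hf (hfiber a) (hindep a ha)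
  have hnonneg : ∀ᵐ ω ∂μ, ∀ a ∈ B, 0 ≤ μ[(A ⁻¹' {a}).indicator (fun _ => (1 : ℝ)) | G] ω :=
    (ae_ball_iff B.countable_toSet).2 fun a _ =>
      condExp_nonneg (ae_of_all _ (Set.indicator_nonneg fun _ _ => zero_le_one))
  rw [indicator_preimage_finset_eq_sum, indicator_preimage_finset_eq_sum]
  filter_upwards [condExp_finsetSum (fun a _ => hf.indicator (hfiber a)) G,
    condExp_finsetSum (fun a _ => (integrable_const (1 : ℝ)).indicator (hfiber a)) G,
    hfiberwise, hnonneg] with ω hsum_f hsum_one hfib hnn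
  rw [hsum_f, hsum_one, Finset.sum_apply, Finset.sum_apply, Finset.mul_sum]
  refine Finset.sum_le_sum fun a ha => ?_
  rw [hfib a ha]
  exact mul_le_mul_of_nonneg_right (hmean a ha) (hnn a ha)

lemma condExp_le_of_integral_cond_le [IsFiniteMeasure μ] (hG : G ≤ mΩ) (hA : Measurable A)
    (hf : Integrable f μ)
    (hindep : ∀ a ∈ B, Indep (MeasurableSpace.comap f inferInstance) G μ[|A ⁻¹' {a}])
    (hmean : ∀ a ∈ B, ∫ x, f x ∂μ[|A ⁻¹' {a}] ≤ r) (hone : ∀ᵐ ω ∂μ, A ω ∉ B → f ω = 1) :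
    μ[f | G] ≤ᵐ[μ] fun ω =>
      r * μ[(A ⁻¹' B).indicator (fun _ => (1 : ℝ)) | G] ω
        + (1 - μ[(A ⁻¹' B).indicator (fun _ => (1 : ℝ)) | G] ω) := by
  have hB : MeasurableSet (A ⁻¹' B) := hA B.finite_toSet.measurableSet
  have hsplit := condExp_add (m := G) (hf.indicator hB) (hf.indicator hB.compl)
  rw [Set.indicator_self_add_compl] at hsplit
  filter_upwards [hsplit, condExp_indicator_preimage_le hG hA hf hindep hmean,
    condExp_indicator_compl_ae_eq hG hB hone] with ω h h_in h_out
  rw [h, Pi.add_apply, h_out]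
  linarith

end ProbabilityTheory

theorem stmt_6_general {Ω : Type*} {mΩ : MeasurableSpace Ω} (P : Measure Ω) [IsProbabilityMeasure P]
    {𝒜 : Type*} [MeasurableSpace 𝒜] [MeasurableSingletonClass 𝒜]
    (A : Ω → 𝒜) (hA : Measurable A) (Y : Ω → ℝ)
    (G : MeasurableSpace Ω) (hG : G ≤ mΩ)
    (B : Finset 𝒜) (hB : B.Nonempty)
    (ρ : 𝒜 → ℝ) (hρ : ∀ a ∈ B, ρ a ∈ Set.Ioo (0 : ℝ) 1)
    (c : ℝ) (hc : c ∈ Set.Ioc (0 : ℝ) 1)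
    -- (i) conditioned on {A = a}, Y is independent of G ...
    (hindep : ∀ a : 𝒜,
      Indep (MeasurableSpace.comap Y inferInstance) G (P[|A ⁻¹' {a}]))
    -- ... and E[e^Y | A = a] ≤ ρ_a for a ∈ B
    (hratio : ∀ a ∈ B, ∫ ω, Real.exp (Y ω) ∂(P[|A ⁻¹' {a}]) ≤ ρ a)
    -- (ii) Y = 0 a.s. on {A ∉ B}
    (hzero : ∀ᵐ ω ∂P, A ω ∉ B → Y ω = 0)
    -- (iii) P(A ∈ B | G) ≥ c a.s.
    (hcond : ∀ᵐ ω ∂P, c ≤ (P[(A ⁻¹' ↑B).indicator (fun _ => (1 : ℝ)) | G]) ω) :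
    (∀ᵐ ω ∂P, (P[fun ω' => Real.exp (Y ω') | G]) ω ≤ c * B.sup' hB ρ + (1 - c)) ∧
    (∀ᵐ ω ∂P, (P[fun ω' => Real.exp (Y ω') | G]) ω < 1) := by
  set r := B.sup' hB ρ
  have hr_pos : 0 < r := (Finset.lt_sup'_iff hB).2 (hB.imp fun a ha => ⟨ha, (hρ a ha).1⟩)
  have hr_lt_one : r < 1 := (Finset.sup'_lt_iff _).2 fun a ha => (hρ a ha).2
  suffices h : ∀ᵐ ω ∂P, (P[fun ω' => Real.exp (Y ω') | G]) ω ≤ c * r + (1 - c) from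
    ⟨h, h.mono fun ω hω => hω.trans_lt (by nlinarith [hc.1])⟩
  by_cases hint : Integrable (fun ω => Real.exp (Y ω)) P
  · have hexp_indep (a : 𝒜) :
        Indep (MeasurableSpace.comap (fun ω => Real.exp (Y ω)) inferInstance) G (P[|A ⁻¹' {a}]) :=
      indep_of_indep_of_le_left (hindep a) (Real.measurable_exp.comp (comap_measurable Y)).comap_le
    have hone : ∀ᵐ ω ∂P, A ω ∉ B → Real.exp (Y ω) = 1 := by
      filter_upwards [hzero] with ω hω hωB
      rw [hω hωB, Real.exp_zero]
    filter_upwards [condExp_le_of_integral_cond_le (r := r) hG hA hint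
      (fun a _ => hexp_indep a) (fun a ha => (hratio a ha).trans (B.le_sup' ρ ha)) hone, hcond]
      with ω hle hc_le
    nlinarith
  · rw [condExp_of_not_integrable hint]
    exact ae_of_all _ fun ω => show (0 : ℝ) ≤ _ by nlinarith [mul_pos hc.1 hr_pos, hc.2]

theorem stmt_6 {Ω : Type*} {mΩ : MeasurableSpace Ω} (P : Measure Ω) [IsProbabilityMeasure P]
    {𝒜 : Type*} [Fintype 𝒜] [MeasurableSpace 𝒜] [MeasurableSingletonClass 𝒜]
    (A : Ω → 𝒜) (hA : Measurable A) (Y : Ω → ℝ) (hY : Measurable Y)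
    (G : MeasurableSpace Ω) (hG : G ≤ mΩ)
    (B : Finset 𝒜) (hB : B.Nonempty)
    (ρ : 𝒜 → ℝ) (hρ : ∀ a ∈ B, ρ a ∈ Set.Ioo (0 : ℝ) 1)
    (c : ℝ) (hc : c ∈ Set.Ioc (0 : ℝ) 1)
    -- (i) conditioned on {A = a}, Y is independent of G ...
    (hindep : ∀ a : 𝒜,
      Indep (MeasurableSpace.comap Y inferInstance) G (P[|A ⁻¹' {a}]))
    -- ... and E[e^Y | A = a] ≤ ρ_a for a ∈ B
    (hratio : ∀ a ∈ B, ∫ ω, Real.exp (Y ω) ∂(P[|A ⁻¹' {a}]) ≤ ρ a)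
    -- (ii) Y = 0 a.s. on {A ∉ B}
    (hzero : ∀ᵐ ω ∂P, A ω ∉ B → Y ω = 0)
    -- (iii) P(A ∈ B | G) ≥ c a.s.
    (hcond : ∀ᵐ ω ∂P, c ≤ (P[(A ⁻¹' ↑B).indicator (fun _ => (1 : ℝ)) | G]) ω) :
    (∀ᵐ ω ∂P, (P[fun ω' => Real.exp (Y ω') | G]) ω ≤ c * B.sup' hB ρ + (1 - c)) ∧
    (∀ᵐ ω ∂P, (P[fun ω' => Real.exp (Y ω') | G]) ω < 1) :=
  stmt_6_general P A hA Y G hG B hB ρ hρ c hc hindep hratio hzero hcond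
end
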